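/- Let S be a nonempty countable family of linear orders and let s ∈ S. Then the ordered sum Ξ(S) + s + Ξ(S) is order isomorphic to Ξ(S). -/

import Mathlib

/-- A coloring `χ : L → ι` of a linear order `L` is *dense* if for every color `i`
and all `x < x'` in `L` there is `y` with `x < y < x'` and `χ y = i`. -/
def DenseColoring {L : Type*} [LinearOrder L] {ι : Type*} (χ : L → ι) : Prop :=
  ∀ i : ι, ∀ x x' : L, x < x' → ∃ y : L, x < y ∧ y < x' ∧ χ y = i

namespace ShuffleAux

open Order

variable {α β ι : Type*} [LinearOrder α] [LinearOrder β]

theorem denseColoring_exists_gt [NoMaxOrder β] {c : β → ι} (hc : DenseColoring c)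
    (i : ι) (x : β) : ∃ y, x < y ∧ c y = i := by
  obtain ⟨z, hz⟩ := NoMaxOrder.exists_gt x
  obtain ⟨y, h1, _, h3⟩ := hc i x z hz
  exact ⟨y, h1, h3⟩

theorem denseColoring_exists_lt [NoMinOrder β] {c : β → ι} (hc : DenseColoring c)
    (i : ι) (x : β) : ∃ y, y < x ∧ c y = i := by
  obtain ⟨z, hz⟩ := NoMinOrder.exists_lt x
  obtain ⟨y, _, h2, h3⟩ := hc i z x hz
  exact ⟨y, h2, h3⟩

/-- Colored version of `Order.exists_between_finsets`. -/
theorem exists_between_finsets_colored [NoMinOrder β] [NoMaxOrder β] [nonem : Nonempty β]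
    {c : β → ι} (hc : DenseColoring c) (i : ι) (lo hi : Finset β)
    (lo_lt_hi : ∀ x ∈ lo, ∀ y ∈ hi, x < y) :
    ∃ m : β, (∀ x ∈ lo, x < m) ∧ (∀ y ∈ hi, m < y) ∧ c m = i := by
  by_cases nlo : lo.Nonempty
  · by_cases nhi : hi.Nonempty
    · obtain ⟨m, h1, h2, h3⟩ :=
        hc i _ _ (lo_lt_hi _ (Finset.max'_mem _ nlo) _ (Finset.min'_mem _ nhi))
      exact ⟨m, fun x hx => lt_of_le_of_lt (Finset.le_max' lo x hx) h1,
        fun y hy => lt_of_lt_of_le h2 (Finset.min'_le hi y hy), h3⟩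
    · obtain ⟨m, h1, h3⟩ := denseColoring_exists_gt hc i (Finset.max' lo nlo)
      exact ⟨m, fun x hx => lt_of_le_of_lt (Finset.le_max' lo x hx) h1,
        fun y hy => (nhi ⟨y, hy⟩).elim, h3⟩
  · by_cases nhi : hi.Nonempty
    · obtain ⟨m, h2, h3⟩ := denseColoring_exists_lt hc i (Finset.min' hi nhi)
      exact ⟨m, fun x hx => (nlo ⟨x, hx⟩).elim,
        fun y hy => lt_of_lt_of_le h2 (Finset.min'_le hi y hy), h3⟩
    · obtain ⟨x⟩ := nonem
      obtain ⟨m, _, h3⟩ := denseColoring_exists_gt hc i x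
      exact ⟨m, fun x hx => (nlo ⟨x, hx⟩).elim, fun y hy => (nhi ⟨y, hy⟩).elim, h3⟩

variable (c₁ : α → ι) (c₂ : β → ι)

/-- Colored partial isomorphisms. -/
def CPartialIso : Type _ :=
  { f : Finset (α × β) //
    (∀ p ∈ f, ∀ q ∈ f, cmp (Prod.fst p) (Prod.fst q) = cmp (Prod.snd p) (Prod.snd q)) ∧
      ∀ p ∈ f, c₂ (Prod.snd p) = c₁ (Prod.fst p) }

namespace CPartialIso

instance : Inhabited (CPartialIso c₁ c₂) :=
  ⟨⟨∅, fun _p h => (Finset.notMem_empty _ h).elim, fun _p h => (Finset.notMem_empty _ h).elim⟩⟩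

instance : Preorder (CPartialIso c₁ c₂) := Subtype.preorder _

variable {c₁ c₂}

theorem exists_across [NoMinOrder β] [NoMaxOrder β] [Nonempty β]
    (hc₂ : DenseColoring c₂) (f : CPartialIso c₁ c₂) (a : α) :
    ∃ b : β, c₂ b = c₁ a ∧ ∀ p ∈ f.val, cmp (Prod.fst p) a = cmp (Prod.snd p) b := by
  by_cases h : ∃ b, (a, b) ∈ f.val
  · obtain ⟨b, hb⟩ := h
    exact ⟨b, f.prop.2 _ hb, fun p hp => f.prop.1 _ hp _ hb⟩
  have :
    ∀ x ∈ (f.val.filter fun p : α × β => p.fst < a).image Prod.snd,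
      ∀ y ∈ (f.val.filter fun p : α × β => a < p.fst).image Prod.snd, x < y := by
    intro x hx y hy
    rw [Finset.mem_image] at hx hy
    rcases hx with ⟨p, hp1, rfl⟩
    rcases hy with ⟨q, hq1, rfl⟩
    rw [Finset.mem_filter] at hp1 hq1
    rw [← lt_iff_lt_of_cmp_eq_cmp (f.prop.1 _ hp1.1 _ hq1.1)]
    exact lt_trans hp1.right hq1.right
  obtain ⟨b, hb, hb', hbc⟩ := exists_between_finsets_colored hc₂ (c₁ a) _ _ this
  refine ⟨b, hbc, ?_⟩
  rintro ⟨p1, p2⟩ hp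
  have hne : p1 ≠ a := fun he => h ⟨p2, he ▸ hp⟩
  cases' lt_or_gt_of_ne hne with hl hr
  · have : p1 < a ∧ p2 < b :=
      ⟨hl, hb _ (Finset.mem_image.mpr ⟨(p1, p2), Finset.mem_filter.mpr ⟨hp, hl⟩, rfl⟩)⟩
    rw [← cmp_eq_lt_iff, ← cmp_eq_lt_iff] at this
    exact this.1.trans this.2.symm
  · have : a < p1 ∧ b < p2 :=
      ⟨hr, hb' _ (Finset.mem_image.mpr ⟨(p1, p2), Finset.mem_filter.mpr ⟨hp, hr⟩, rfl⟩)⟩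
    rw [← cmp_eq_gt_iff, ← cmp_eq_gt_iff] at this
    exact this.1.trans this.2.symm

/-- Symmetry of colored partial isos. -/
protected def comm (f : CPartialIso c₁ c₂) : CPartialIso c₂ c₁ := by
  refine ⟨f.val.image (Equiv.prodComm _ _), fun p hp q hq => ?_, fun p hp => ?_⟩
  · simp only [Finset.mem_image] at hp hq
    obtain ⟨⟨x, y⟩, hxy, rfl⟩ := hp
    obtain ⟨⟨x', y'⟩, hxy', rfl⟩ := hq
    simpa using (f.prop.1 _ hxy _ hxy').symm
  · simp only [Finset.mem_image] at hp
    obtain ⟨⟨x, y⟩, hxy, rfl⟩ := hp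
    simpa using (f.prop.2 _ hxy).symm

theorem mem_comm {f : CPartialIso c₁ c₂} {a : α} {b : β} :
    (b, a) ∈ f.comm.val ↔ (a, b) ∈ f.val := by
  constructor
  · intro h
    simp only [CPartialIso.comm, Finset.mem_image] at h
    obtain ⟨⟨x, y⟩, hxy, hea⟩ := h
    simp only [Equiv.prodComm_apply, Prod.swap_prod_mk, Prod.mk.injEq] at hea
    obtain ⟨rfl, rfl⟩ := hea
    exact hxy
  · intro h
    exact Finset.mem_image_of_mem _ h

variable (c₁ c₂)

/-- Colored partial isos defined at `a`. -/
def definedAtLeft [NoMinOrder β] [NoMaxOrder β] [Nonempty β]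
    (hc₂ : DenseColoring c₂) (a : α) : Cofinal (CPartialIso c₁ c₂) where
  carrier := {f | ∃ b : β, (a, b) ∈ f.val}
  isCofinal f := by
    obtain ⟨b, bcol, a_b⟩ := exists_across hc₂ f a
    refine ⟨⟨insert (a, b) f.val, ?_, ?_⟩, ⟨b, Finset.mem_insert_self _ _⟩,
      Finset.subset_insert _ _⟩
    · intro p hp q hq
      rw [Finset.mem_insert] at hp hq
      rcases hp with (rfl | pf) <;> rcases hq with (rfl | qf)
      · simp only [cmp_self_eq_eq]
      · rw [cmp_eq_cmp_symm]
        exact a_b _ qf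
      · exact a_b _ pf
      · exact f.prop.1 _ pf _ qf
    · intro p hp
      rw [Finset.mem_insert] at hp
      rcases hp with (rfl | pf)
      · exact bcol
      · exact f.prop.2 _ pf

/-- Colored partial isos defined at `b`. -/
def definedAtRight [NoMinOrder α] [NoMaxOrder α] [Nonempty α]
    (hc₁ : DenseColoring c₁) (b : β) : Cofinal (CPartialIso c₁ c₂) where
  carrier := {f | ∃ a, (a, b) ∈ f.val}
  isCofinal f := by
    rcases (definedAtLeft c₂ c₁ hc₁ b).isCofinal f.comm with ⟨f', ⟨a, ha⟩, hl⟩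
    refine ⟨f'.comm, ⟨a, mem_comm.mpr ha⟩, fun p hp => ?_⟩
    obtain ⟨x, y⟩ := p
    exact mem_comm.mpr (hl (mem_comm.mpr hp))

end CPartialIso

open CPartialIso

/-- Colored back-and-forth: two countable unbounded linear orders with dense
colorings by the same index type are isomorphic as colored orders. -/
theorem colored_iso [Countable α] [NoMinOrder α] [NoMaxOrder α] [Nonempty α]
    [Countable β] [NoMinOrder β] [NoMaxOrder β] [Nonempty β]
    {c₁ : α → ι} {c₂ : β → ι} (h₁ : DenseColoring c₁) (h₂ : DenseColoring c₂) :
    ∃ e : α ≃o β, ∀ a, c₂ (e a) = c₁ a := by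
  cases nonempty_encodable α
  cases nonempty_encodable β
  haveI : Encodable (α ⊕ β) := inferInstance
  let to_cofinal : α ⊕ β → Cofinal (CPartialIso c₁ c₂) := fun p =>
    Sum.recOn p (definedAtLeft c₁ c₂ h₂) (definedAtRight c₁ c₂ h₁)
  let our_ideal : Ideal (CPartialIso c₁ c₂) := idealOfCofinals default to_cofinal
  have hF : ∀ a : α, ∃ b : β, ∃ f ∈ our_ideal, (a, b) ∈ f.val := by
    intro a
    obtain ⟨f, ⟨b, hb⟩, hf⟩ := cofinal_meets_idealOfCofinals default to_cofinal (Sum.inl a)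
    exact ⟨b, f, hf, hb⟩
  have hG : ∀ b : β, ∃ a : α, ∃ f ∈ our_ideal, (a, b) ∈ f.val := by
    intro b
    obtain ⟨f, ⟨a, ha⟩, hf⟩ := cofinal_meets_idealOfCofinals default to_cofinal (Sum.inr b)
    exact ⟨a, f, hf, ha⟩
  choose F hF' using hF
  choose G hG' using hG
  have key : ∀ a b, cmp a (G b) = cmp (F a) b := by
    intro a b
    obtain ⟨f, hf, ha⟩ := hF' a
    obtain ⟨g, hg, hb⟩ := hG' b
    obtain ⟨m, _, fm, gm⟩ := our_ideal.directed _ hf _ hg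
    exact m.prop.1 (a, _) (fm ha) (_, b) (gm hb)
  refine ⟨OrderIso.ofCmpEqCmp F G key, ?_⟩
  intro a
  obtain ⟨f, hf, ha⟩ := hF' a
  exact f.prop.2 _ ha

open Sum

/-- Congruence of lexicographic sigma orders. -/
noncomputable def sigmaLexCongr {A B : Type*} [LinearOrder A] [LinearOrder B]
    (MA : A → Type*) (MB : B → Type*) [∀ a, LinearOrder (MA a)] [∀ b, LinearOrder (MB b)]
    (e : A ≃o B) (φ : ∀ a, MA a ≃o MB (e a)) : (Σₗ a, MA a) ≃o (Σₗ b, MB b) := by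
  letI f : (Σₗ a, MA a) → (Σₗ b, MB b) := fun x => ⟨e x.1, φ x.1 x.2⟩
  have hsm : StrictMono f := by
    rintro ⟨i, a⟩ ⟨j, b⟩ (⟨_, _, h⟩ | ⟨_, b, h⟩)
    · exact Sigma.Lex.left _ _ (e.strictMono h)
    · exact Sigma.Lex.right _ _ ((φ i).strictMono h)
  apply hsm.orderIsoOfSurjective
  rintro ⟨j, b⟩
  refine ⟨⟨e.symm j, (φ (e.symm j)).symm ((e.apply_symm_apply j).symm ▸ b)⟩, ?_⟩
  show (⟨e (e.symm j), (φ _) ((φ _).symm _)⟩ : Σₗ b, MB b) = ⟨j, b⟩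
  refine Sigma.ext (e.apply_symm_apply j) ?_
  exact heq_of_eq_of_heq (OrderIso.apply_symm_apply _ _) (eqRec_heq _ _)

/-- The order iso between fibers given by an equality of indices. -/
def eqOrderIso {ι : Type*} (F : ι → Type*) [∀ i, LinearOrder (F i)] {i j : ι} (h : i = j) :
    F i ≃o F j := by subst h; exact OrderIso.refl _

/-- Splitting a lex sigma over a lex sum base. -/
noncomputable def sigmaLexSumSplit {A B : Type*} [LinearOrder A] [LinearOrder B]
    (M : A ⊕ₗ B → Type*) [∀ x, LinearOrder (M x)] :
    (Σₗ x : A ⊕ₗ B, M x) ≃o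
      (Σₗ a : A, M (toLex (inl a))) ⊕ₗ (Σₗ b : B, M (toLex (inr b))) := by
  letI f : (Σₗ x : A ⊕ₗ B, M x) →
      (Σₗ a : A, M (toLex (inl a))) ⊕ₗ (Σₗ b : B, M (toLex (inr b))) := fun x =>
    match x with
    | ⟨Sum.inl a, m⟩ => toLex (inl (⟨a, m⟩ : Σₗ a : A, M (toLex (inl a))))
    | ⟨Sum.inr b, m⟩ => toLex (inr (⟨b, m⟩ : Σₗ b : B, M (toLex (inr b))))
  have hsm : StrictMono f := by
    rintro ⟨(a | b), m⟩ ⟨(a' | b'), m'⟩ (⟨_, _, h⟩ | ⟨_, _, h⟩) <;>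
      first
        | exact Sum.Lex.inl (Sigma.Lex.left _ _ (by exact Sum.lex_inl_inl.mp h))
        | exact Sum.Lex.sep _ _
        | exact (Sum.lex_inr_inl h).elim
        | exact Sum.Lex.inr (Sigma.Lex.left _ _ (by exact Sum.lex_inr_inr.mp h))
        | exact Sum.Lex.inl (Sigma.Lex.right _ _ h)
        | exact Sum.Lex.inr (Sigma.Lex.right _ _ h)
  apply hsm.orderIsoOfSurjective
  rintro (⟨a, m⟩ | ⟨b, m⟩)
  · exact ⟨⟨Sum.inl a, m⟩, rfl⟩
  · exact ⟨⟨Sum.inr b, m⟩, rfl⟩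

/-- A lex sigma over `PUnit`. -/
noncomputable def sigmaLexPUnit (M : PUnit → Type*) [∀ x, LinearOrder (M x)] :
    (Σₗ x : PUnit, M x) ≃o M PUnit.unit := by
  letI f : (Σₗ x : PUnit, M x) → M PUnit.unit := fun x =>
    match x with
    | ⟨PUnit.unit, m⟩ => m
  have hsm : StrictMono f := by
    rintro ⟨⟨⟩, m⟩ ⟨⟨⟩, m'⟩ (⟨_, _, h⟩ | ⟨_, _, h⟩)
    · exact absurd h (lt_irrefl _)
    · exact h
  apply hsm.orderIsoOfSurjective
  intro m
  exact ⟨⟨PUnit.unit, m⟩, rfl⟩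

/-- Congruence of lex sums. -/
noncomputable def sumLexCongr' {A B C D : Type*} [LinearOrder A] [LinearOrder B]
    [LinearOrder C] [LinearOrder D] (e₁ : A ≃o C) (e₂ : B ≃o D) : A ⊕ₗ B ≃o C ⊕ₗ D := by
  letI f : A ⊕ₗ B → C ⊕ₗ D := fun x =>
    match x with
    | Sum.inl a => toLex (inl (e₁ a))
    | Sum.inr b => toLex (inr (e₂ b))
  have hsm : StrictMono f := by
    rintro (a | b) (a' | b') h
    · exact Sum.Lex.inl (e₁.strictMono (Sum.lex_inl_inl.mp h))
    · exact Sum.Lex.sep _ _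
    · exact (Sum.lex_inr_inl h).elim
    · exact Sum.Lex.inr (e₂.strictMono (Sum.lex_inr_inr.mp h))
  apply hsm.orderIsoOfSurjective
  rintro (c | d)
  · exact ⟨Sum.inl (e₁.symm c), by show toLex (inl (e₁ (e₁.symm c))) = _; rw [OrderIso.apply_symm_apply]; rfl⟩
  · exact ⟨Sum.inr (e₂.symm d), by show toLex (inr (e₂ (e₂.symm d))) = _; rw [OrderIso.apply_symm_apply]; rfl⟩


end ShuffleAux

namespace ShuffleAux

open Sum

/-- The coloring of the base order `(ℚ ⊕ₗ PUnit) ⊕ₗ ℚ`. -/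
def colC {ι : Type*} (χ : ℚ → ι) (s : ι) : ((ℚ ⊕ₗ PUnit) ⊕ₗ ℚ) → ι := fun x =>
  Sum.elim (fun y => Sum.elim χ (fun _ => s) (ofLex y)) χ (ofLex x)

theorem colC_dense {ι : Type*} {χ : ℚ → ι} (hχ : DenseColoring χ) (s : ι) :
    DenseColoring (colC χ s) := by
  intro i x x' h
  rcases h with ⟨h'⟩ | ⟨h'⟩ | ⟨a, q'⟩
  · -- both in the left summand ℚ ⊕ₗ PUnit
    rcases h' with ⟨hq⟩ | ⟨hu⟩ | ⟨q, u⟩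
    · -- both in leftmost ℚ
      obtain ⟨y, h1, h2, h3⟩ := hχ i _ _ hq
      exact ⟨toLex (inl (toLex (inl y))), Sum.Lex.inl (Sum.Lex.inl h1),
        Sum.Lex.inl (Sum.Lex.inl h2), h3⟩
    · exact absurd hu (lt_irrefl _)
    · -- q in leftmost ℚ, then the PUnit point
      obtain ⟨y, h1, _, h3⟩ := hχ i q (q + 1) (lt_add_one q)
      exact ⟨toLex (inl (toLex (inl y))), Sum.Lex.inl (Sum.Lex.inl h1),
        Sum.Lex.inl (Sum.Lex.sep _ _), h3⟩
  · -- both in the right ℚ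
    obtain ⟨y, h1, h2, h3⟩ := hχ i _ _ h'
    exact ⟨toLex (inr y), Sum.Lex.inr h1, Sum.Lex.inr h2, h3⟩
  · -- x in left summand, x' in right ℚ
    obtain ⟨y, _, h2, h3⟩ := hχ i (q' - 1) q' (by linarith)
    exact ⟨toLex (inr y), Sum.Lex.sep _ _, Sum.Lex.inr h2, h3⟩

end ShuffleAux


open ShuffleAux in
/-- For a nonempty countable family of linear orders and a shuffland `s` of the
family, `Ξ(S) + s + Ξ(S) ≅ Ξ(S)`. -/
theorem shuffle_add_shuffland_add_self {ι : Type*} [Nonempty ι] [Countable ι]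
    (F : ι → Type*) [∀ i, LinearOrder (F i)]
    (χ : ℚ → ι) (hχ : DenseColoring χ) (s : ι) :
    Nonempty ((((Σₗ q : ℚ, F (χ q)) ⊕ₗ F s) ⊕ₗ (Σₗ q : ℚ, F (χ q)))
      ≃o (Σₗ q : ℚ, F (χ q))) := by
  classical
  haveI : Countable ((ℚ ⊕ₗ PUnit.{1}) ⊕ₗ ℚ) := inferInstanceAs (Countable ((ℚ ⊕ PUnit.{1}) ⊕ ℚ))
  haveI : Nonempty ((ℚ ⊕ₗ PUnit.{1}) ⊕ₗ ℚ) := ⟨toLex (Sum.inr 0)⟩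
  obtain ⟨e, he⟩ := colored_iso (colC_dense hχ s) hχ
  -- reindexing isomorphism
  let iso2 : (Σₗ x : (ℚ ⊕ₗ PUnit.{1}) ⊕ₗ ℚ, F (colC χ s x)) ≃o (Σₗ q : ℚ, F (χ q)) :=
    sigmaLexCongr (fun x => F (colC χ s x)) (fun q => F (χ q)) e
      (fun x => eqOrderIso F (he x).symm)
  -- splitting isomorphism
  let isoA : (Σₗ x : (ℚ ⊕ₗ PUnit.{1}) ⊕ₗ ℚ, F (colC χ s x)) ≃o
      (Σₗ y : ℚ ⊕ₗ PUnit, F (colC χ s (toLex (Sum.inl y)))) ⊕ₗ (Σₗ q : ℚ, F (χ q)) :=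
    sigmaLexSumSplit _
  let isoB : (Σₗ y : ℚ ⊕ₗ PUnit, F (colC χ s (toLex (Sum.inl y)))) ≃o
      (Σₗ q : ℚ, F (χ q)) ⊕ₗ (Σₗ u : PUnit, F s) :=
    sigmaLexSumSplit _
  let isoC : (Σₗ u : PUnit, F s) ≃o F s := sigmaLexPUnit _
  let isoTotal : (Σₗ x : (ℚ ⊕ₗ PUnit.{1}) ⊕ₗ ℚ, F (colC χ s x)) ≃o
      (((Σₗ q : ℚ, F (χ q)) ⊕ₗ F s) ⊕ₗ (Σₗ q : ℚ, F (χ q))) :=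
    isoA.trans (sumLexCongr' (isoB.trans (sumLexCongr' (OrderIso.refl _) isoC))
      (OrderIso.refl _))
  exact ⟨isoTotal.symm.trans iso2⟩
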